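/- arXiv:1111.3051 — 3 statements merged into one kernel-verified Lean document; each statement's English description precedes it below -/
import Mathlib

section
/- Let F(y,z) = z^3 y + z y^2 + b_1 z + a_1 y + a_2 b_1 + a_3 y^2 + a_4 z y with b_1 ≠ 0. If a point (y_0, z_0) satisfies F(y_0,z_0) = 0 together with the vanishing of all first and second partial derivatives of F at (y_0,z_0) (i.e. F_y = F_z = F_{zz} = F_{yy} = F_{yz} = 0 at (y_0,z_0)), then z_0 = 0, a_1 = a_2 = a_3 = 0, a_4 = -2y_0, and y_0^2 + b_1 + a_4 y_0 = 0; in particular a_4^2 = 4 b_1. -/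
lemma dcube (c3 c2 c1 c0 : ℂ) :
    deriv (fun x : ℂ => c3 * x ^ 3 + c2 * x ^ 2 + c1 * x + c0)
      = fun x => 3 * c3 * x ^ 2 + 2 * c2 * x + c1 := by
  funext x
  have h : HasDerivAt (fun x : ℂ => c3 * x ^ 3 + c2 * x ^ 2 + c1 * x + c0)
      (c3 * (3 * x ^ 2) + c2 * (2 * x ^ 1) + c1 * 1) x := by
    have h1 : HasDerivAt (fun x : ℂ => c3 * x ^ 3) (c3 * (3 * x ^ 2)) x := by
      simpa using (hasDerivAt_pow 3 x).const_mul c3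
    have h2 : HasDerivAt (fun x : ℂ => c2 * x ^ 2) (c2 * (2 * x ^ 1)) x := by
      simpa using (hasDerivAt_pow 2 x).const_mul c2
    have h3 : HasDerivAt (fun x : ℂ => c1 * x) (c1 * 1) x :=
      (hasDerivAt_id x).const_mul c1
    exact ((h1.add h2).add h3).add_const c0
  rw [h.deriv]; ring

/-- If `F(y,z) = z^3 y + z y^2 + b₁ z + a₁ y + a₂ b₁ + a₃ y^2 + a₄ z y` with `b₁ ≠ 0`
vanishes together with all its first and second partial derivatives at `(y₀, z₀)`, then
`z₀ = 0`, `a₁ = a₂ = a₃ = 0`, `a₄ = -2 y₀`, `y₀^2 + b₁ + a₄ y₀ = 0`, and `a₄^2 = 4 b₁`. -/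
theorem stmt2 (b1 a1 a2 a3 a4 y0 z0 : ℂ) (hb : b1 ≠ 0)
    (F : ℂ → ℂ → ℂ)
    (hF : ∀ y z, F y z = z ^ 3 * y + z * y ^ 2 + b1 * z + a1 * y + a2 * b1
      + a3 * y ^ 2 + a4 * z * y)
    (h0 : F y0 z0 = 0)
    (hy : deriv (fun y => F y z0) y0 = 0)
    (hz : deriv (fun z => F y0 z) z0 = 0)
    (hzz : deriv (fun z => deriv (fun w => F y0 w) z) z0 = 0)
    (hyy : deriv (fun y => deriv (fun w => F w z0) y) y0 = 0)
    (hyz : deriv (fun y => deriv (fun z => F y z) z0) y0 = 0) :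
    z0 = 0 ∧ a1 = 0 ∧ a2 = 0 ∧ a3 = 0 ∧ a4 = -2 * y0 ∧
      y0 ^ 2 + b1 + a4 * y0 = 0 ∧ a4 ^ 2 = 4 * b1 := by
  -- normal forms
  have hFy : ∀ z : ℂ, (fun y => F y z)
      = fun y => (0 : ℂ) * y ^ 3 + (z + a3) * y ^ 2 + (z ^ 3 + a1 + a4 * z) * y
        + (b1 * z + a2 * b1) := by
    intro z; funext y; rw [hF]; ring
  have hFz : ∀ y : ℂ, (fun z => F y z)
      = fun z => y * z ^ 3 + (0 : ℂ) * z ^ 2 + (y ^ 2 + b1 + a4 * y) * z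
        + (a1 * y + a2 * b1 + a3 * y ^ 2) := by
    intro y; funext z; rw [hF]; ring
  -- first derivatives
  rw [hFy z0, dcube] at hy
  rw [hFz y0, dcube] at hz
  -- hzz
  have e1 : (fun z => deriv (fun w => F y0 w) z)
      = fun z => (0:ℂ) * z ^ 3 + (3 * y0) * z ^ 2 + (0:ℂ) * z + (y0 ^ 2 + b1 + a4 * y0) := by
    funext z
    rw [hFz y0, dcube]; ring
  rw [e1, dcube] at hzz
  -- hyy
  have e2 : (fun y => deriv (fun w => F w z0) y)
      = fun y => (0:ℂ) * y ^ 3 + (0:ℂ) * y ^ 2 + (2 * (z0 + a3)) * y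
        + (z0 ^ 3 + a1 + a4 * z0) := by
    funext y
    rw [hFy z0, dcube]; ring
  rw [e2, dcube] at hyy
  -- hyz
  have e3 : (fun y => deriv (fun z => F y z) z0)
      = fun y => (0:ℂ) * y ^ 3 + (1:ℂ) * y ^ 2 + (3 * z0 ^ 2 + a4) * y + b1 := by
    funext y
    rw [hFz y, dcube]; ring
  rw [e3, dcube] at hyz
  rw [hF] at h0
  simp only [] at hy hz hzz hyy hyz
  -- algebra
  have hz0 : z0 = 0 := by
    by_contra hne
    have hy0 : y0 = 0 := by
      have : 6 * y0 * z0 = 0 := by linear_combination hzz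
      rcases mul_eq_zero.mp this with h | h
      · rcases mul_eq_zero.mp h with h' | h'
        · norm_num at h'
        · exact h'
      · exact absurd h hne
    apply hb
    linear_combination hz - (3 * z0 ^ 2 + y0 + a4) * hy0
  subst hz0
  have ha3 : a3 = 0 := by linear_combination hyy / 2
  have ha4 : a4 = -2 * y0 := by linear_combination hyz
  have ha1 : a1 = 0 := by linear_combination hy - 2 * y0 * ha3
  have hq : y0 ^ 2 + b1 + a4 * y0 = 0 := by linear_combination hz
  have ha2 : a2 = 0 := by
    have : a2 * b1 = 0 := by linear_combination h0 - y0 * ha1 - y0 ^ 2 * ha3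
    exact (mul_eq_zero.mp this).resolve_right hb
  refine ⟨rfl, ha1, ha2, ha3, ha4, hq, ?_⟩
  linear_combination (a4 + 2 * y0) * ha4 - 4 * hq
end

section
/- Conversely, let b_1 ≠ 0, a_1 = a_2 = a_3 = 0 and a_4^2 = 4 b_1, and set F(y,z) = z^3 y + z y^2 + b_1 z + a_4 z y. Then the curve F = 0 has a point of multiplicity exactly three at (y_0, z_0) = (-a_4/2, 0): F and all of its partial derivatives of order ≤ 2 vanish at this point, while some third-order partial derivative does not vanish. -/
open MvPolynomial

/-- For `b₁ ≠ 0`, `a₄^2 = 4 b₁`, the curve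
`F(y,z) = z^3 y + z y^2 + b₁ z + a₄ z y = 0` has a point of multiplicity exactly three at
`(y₀, z₀) = (-a₄/2, 0)`: `F` and all of its partial derivatives of order ≤ 2 vanish there,
while some third-order partial derivative does not vanish.  (Variables: `0 = y`, `1 = z`.) -/
theorem stmt3 (b1 a4 : ℂ) (hb : b1 ≠ 0) (ha : a4 ^ 2 = 4 * b1) :
    let F : MvPolynomial (Fin 2) ℂ :=
      X 1 ^ 3 * X 0 + X 1 * X 0 ^ 2 + C b1 * X 1 + C a4 * X 1 * X 0
    let pt : Fin 2 → ℂ := ![-a4 / 2, 0]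
    eval pt F = 0 ∧
    (∀ i : Fin 2, eval pt (pderiv i F) = 0) ∧
    (∀ i j : Fin 2, eval pt (pderiv i (pderiv j F)) = 0) ∧
    (∃ i j k : Fin 2, eval pt (pderiv i (pderiv j (pderiv k F))) ≠ 0) := by
  intro F pt
  have h2 : pt 0 = -a4/2 := rfl
  have h3 : pt 1 = 0 := rfl
  refine ⟨?_, ?_, ?_, ⟨1, 0, 0, ?_⟩⟩
  case refine_4 =>
    have : (pderiv (0:Fin 2)) (2 : MvPolynomial (Fin 2) ℂ) = 0 := by
      rw [show (2 : MvPolynomial (Fin 2) ℂ) = C 2 from (map_ofNat C 2).symm]; exact pderiv_C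
    simp [F, pderiv_X, Pi.single_apply, h2, h3, this]
  · simp [F, h2, h3]
  · intro i
    fin_cases i <;>
      simp [F, pderiv_X, Pi.single_apply, h2, h3] <;> linear_combination -ha/4
  · intro i j
    fin_cases i <;> fin_cases j <;>
      simp [F, pderiv_X, Pi.single_apply, h2, h3] <;> ring
end

section
/- In the quotient module T^1 = (O f_1* ⊕ O f_2*) / ⟨ z f_1* + y f_2*, z f_1* + x f_2*, (3z^2 + x + y) f_1* ⟩, where O = C[x,y,z]/((x+y+z^2)z, xy), the classes of f_1*, x f_1*, y f_1*, z f_1*, f_2*, z f_2*, z^2 f_2* form a basis; in particular T^1 is a 7-dimensional complex vector space. -/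
open MvPolynomial

noncomputable section

/-- The ideal `I = ((x + y + z²)z, xy)` of the space curve singularity. -/
def Ising : Ideal (MvPolynomial (Fin 3) ℂ) :=
  Ideal.span {(X 0 + X 1 + X 2 ^ 2) * X 2, X 0 * X 1}

/-- The local ring `O = ℂ[x,y,z]/((x+y+z²)z, xy)`. -/
abbrev Osing := MvPolynomial (Fin 3) ℂ ⧸ Ising

def xb : Osing := Ideal.Quotient.mk Ising (X 0)
def yb : Osing := Ideal.Quotient.mk Ising (X 1)
def zb : Osing := Ideal.Quotient.mk Ising (X 2)

/-- The submodule of relations `⟨z f₁* + y f₂*, z f₁* + x f₂*, (3z² + x + y) f₁*⟩`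
inside the free module `O f₁* ⊕ O f₂*`. -/
def Nrel : Submodule Osing (Osing × Osing) :=
  Submodule.span Osing {(zb, yb), (zb, xb), (3 * zb ^ 2 + xb + yb, 0)}

/-- The versal deformation space `T¹ = (O f₁* ⊕ O f₂*)/N`. -/
abbrev T1 := (Osing × Osing) ⧸ Nrel

/-- The classes of `f₁*, x f₁*, y f₁*, z f₁*, f₂*, z f₂*, z² f₂*` in `T¹`. -/
def T1basis : Fin 7 → T1 :=
  ![Submodule.Quotient.mk (1, 0), Submodule.Quotient.mk (xb, 0),
    Submodule.Quotient.mk (yb, 0), Submodule.Quotient.mk (zb, 0),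
    Submodule.Quotient.mk (0, 1), Submodule.Quotient.mk (0, zb),
    Submodule.Quotient.mk (0, zb ^ 2)]

/-!
`T¹` is isomorphic, as an `O`-module, to `ℂ⁷` on which `x`, `y`, `z` act by three explicit
commuting matrices satisfying the relations of `I`. The map `T¹ → ℂ⁷` sending `f₁*, f₂*` to
`e₀, e₄` is well defined because `e₀, e₄` satisfy the three relations. Its candidate inverse sends
`eᵢ` to the `i`-th class of `T1basis`; it is `O`-linear because it commutes with `x`, `y`, `z`,
which for each generator is witnessed by an explicit syzygy in `O²`. The two maps are
mutually inverse on the generators, so `T1basis` is the image of the standard basis.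
-/

open scoped IsMulCommutative in
def MvPolynomial.aevalOfCommute {σ R A : Type*} [CommSemiring R] [Semiring A] [Algebra R A]
    (f : σ → A) (hf : ∀ i j, Commute (f i) (f j)) : MvPolynomial σ R →ₐ[R] A :=
  have := Algebra.isMulCommutative_adjoin R (s := Set.range f) <| by
    rintro _ ⟨i, rfl⟩ _ ⟨j, rfl⟩
    exact hf i j
  (Algebra.adjoin R (Set.range f)).val.comp
    (aeval fun i => ⟨f i, Algebra.subset_adjoin ⟨i, rfl⟩⟩)

@[simp]
theorem MvPolynomial.aevalOfCommute_X {σ R A : Type*} [CommSemiring R] [Semiring A] [Algebra R A]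
    (f : σ → A) (hf : ∀ i j, Commute (f i) (f j)) (i : σ) :
    aevalOfCommute (R := R) f hf (X i) = f i := by
  simp [aevalOfCommute]

theorem Ideal.Quotient.adjoin_range_mk_X {σ R : Type*} [CommRing R]
    (I : Ideal (MvPolynomial σ R)) :
    Algebra.adjoin R (Set.range fun i => Ideal.Quotient.mk I (X i)) = ⊤ := by
  have : (Set.range fun i => Ideal.Quotient.mk I (X i)) =
      Ideal.Quotient.mkₐ R I '' Set.range X := by
    rw [← Set.range_comp]
    rfl
  rw [this, Algebra.adjoin_image, adjoin_range_X, Algebra.map_top, AlgHom.range_eq_top]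
  exact Ideal.Quotient.mkₐ_surjective R I

theorem LinearMap.map_smul_of_adjoin_eq_top {R A M N : Type*} [CommSemiring R] [Semiring A]
    [Algebra R A] [AddCommMonoid M] [Module R M] [Module A M] [IsScalarTower R A M]
    [AddCommMonoid N] [Module R N] [Module A N] [IsScalarTower R A N]
    {s : Set A} (hs : Algebra.adjoin R s = ⊤) (f : M →ₗ[R] N)
    (hf : ∀ a ∈ s, ∀ m, f (a • m) = a • f m) (a : A) (m : M) : f (a • m) = a • f m := by
  have ha : a ∈ Algebra.adjoin R s := hs ▸ Algebra.mem_top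
  induction ha using Algebra.adjoin_induction generalizing m with
  | mem a ha => exact hf a ha m
  | algebraMap r => simp only [algebraMap_smul, map_smul]
  | add a b _ _ ha hb => simp only [add_smul, map_add, ha, hb]
  | mul a b _ _ ha hb => simp only [mul_smul, ha, hb]

/- Multiplication by `x`, `y`, `z` on `T¹` in the coordinates of `T1basis`; for instance
`x • (z f₂*) = (x f₁* + y f₁*) / 3` and `z • (z² f₂*) = -2 (x f₁* + y f₁*) / 3`. -/

def actX : Module.End ℂ (Fin 7 → ℂ) where
  toFun m := ![0, m 0 + 3⁻¹ * m 5, 3⁻¹ * m 5, -m 4, 0, 0, 0]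
  map_add' a b := by funext i; fin_cases i <;> simp <;> ring
  map_smul' r a := by funext i; fin_cases i <;> simp <;> ring

def actY : Module.End ℂ (Fin 7 → ℂ) where
  toFun m := ![0, 3⁻¹ * m 5, m 0 + 3⁻¹ * m 5, -m 4, 0, 0, 0]
  map_add' a b := by funext i; fin_cases i <;> simp <;> ring
  map_smul' r a := by funext i; fin_cases i <;> simp <;> ring

def actZ : Module.End ℂ (Fin 7 → ℂ) where
  toFun m := ![0, -3⁻¹ * (m 3 + 2 * m 6), -3⁻¹ * (m 3 + 2 * m 6), m 0, 0, m 4, m 5]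
  map_add' a b := by funext i; fin_cases i <;> simp <;> ring
  map_smul' r a := by funext i; fin_cases i <;> simp <;> ring

theorem act_commute : ∀ i j, Commute (![actX, actY, actZ] i) (![actX, actY, actZ] j) := by
  have hXY : Commute actX actY := by
    ext m i; fin_cases i <;> simp [actX, actY]
  have hXZ : Commute actX actZ := by
    ext m i; fin_cases i <;> simp [actX, actZ]
  have hYZ : Commute actY actZ := by
    ext m i; fin_cases i <;> simp [actY, actZ]
  intro i j
  fin_cases i <;> fin_cases j <;> simp [hXY, hXZ, hYZ, hXY.symm, hXZ.symm, hYZ.symm]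

theorem Ising_le_ker_aevalOfCommute :
    Ising ≤ RingHom.ker (aevalOfCommute (R := ℂ) _ act_commute) := by
  rw [Ising, Ideal.span_le]
  rintro _ (rfl | rfl) <;> ext m i <;> fin_cases i <;>
    simp [actX, actY, actZ, pow_two] <;> ring

def modelAction : Osing →ₐ[ℂ] Module.End ℂ (Fin 7 → ℂ) :=
  Ideal.Quotient.liftₐ Ising (aevalOfCommute _ act_commute) fun _ ha =>
    RingHom.mem_ker.mp (Ising_le_ker_aevalOfCommute ha)

instance : Module Osing (Fin 7 → ℂ) := Module.compHom _ modelAction.toRingHom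

theorem smul_coords (a : Osing) (m : Fin 7 → ℂ) : a • m = modelAction a m := rfl

instance : IsScalarTower ℂ Osing (Fin 7 → ℂ) where
  smul_assoc r a m := by simp [smul_coords]

theorem modelAction_mk_X (i : Fin 3) :
    modelAction (Ideal.Quotient.mk Ising (X i)) = ![actX, actY, actZ] i := by
  rw [← Ideal.Quotient.mkₐ_eq_mk ℂ, ← AlgHom.comp_apply, modelAction,
    Ideal.Quotient.liftₐ_comp, aevalOfCommute_X]

@[simp] theorem modelAction_xb : modelAction xb = actX := modelAction_mk_X 0
@[simp] theorem modelAction_yb : modelAction yb = actY := modelAction_mk_X 1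
@[simp] theorem modelAction_zb : modelAction zb = actZ := modelAction_mk_X 2

def toCoords : T1 →ₗ[Osing] (Fin 7 → ℂ) :=
  Nrel.liftQ ((LinearMap.toSpanSingleton _ _ (Pi.single 0 1)).coprod
    (LinearMap.toSpanSingleton _ _ (Pi.single 4 1))) <| by
    rw [Nrel, Submodule.span_le]
    rintro _ (rfl | rfl | rfl) <;> ext i <;> fin_cases i <;>
      simp [smul_coords, pow_two, map_ofNat, actX, actY, actZ]

theorem toCoords_T1basis (i : Fin 7) : toCoords (T1basis i) = Pi.single i 1 := by
  fin_cases i <;> ext j <;> fin_cases j <;>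
    simp [T1basis, toCoords, smul_coords, pow_two, actZ, actX, actY]

theorem xb_mul_yb : xb * yb = 0 := by
  rw [xb, yb, ← map_mul, Ideal.Quotient.eq_zero_iff_mem]
  exact Ideal.subset_span (by simp)

theorem xb_add_yb_add_zb_sq_mul_zb : (xb + yb + zb ^ 2) * zb = 0 := by
  rw [xb, yb, zb, ← map_pow, ← map_add, ← map_add, ← map_mul, Ideal.Quotient.eq_zero_iff_mem]
  exact Ideal.subset_span (by simp)

theorem mk_eq_mk_of (p q : Osing × Osing) (r₁ r₂ r₃ : Osing)
    (h₁ : p.1 - q.1 = (r₁ + r₂) * zb + r₃ * (3 * zb ^ 2 + xb + yb))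
    (h₂ : p.2 - q.2 = r₁ * yb + r₂ * xb) :
    (Submodule.Quotient.mk p : T1) = Submodule.Quotient.mk q := by
  have hmem : r₁ • (zb, yb) + r₂ • (zb, xb) + r₃ • (3 * zb ^ 2 + xb + yb, 0) ∈ Nrel := by
    refine add_mem (add_mem ?_ ?_) ?_ <;>
      exact Submodule.smul_mem _ _ (Submodule.subset_span (by simp))
  rw [Submodule.Quotient.eq]
  convert hmem using 1
  ext
  · simp only [Prod.fst_sub, Prod.fst_add, Prod.smul_fst, smul_eq_mul]
    linear_combination h₁
  · simp only [Prod.snd_sub, Prod.snd_add, Prod.smul_snd, smul_eq_mul, mul_zero, add_zero]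
    linear_combination h₂

local notation "ι" => algebraMap ℂ Osing

-- `Algebra.smul_def` itself does not match the quotient's `SMul ℂ Osing` instance syntactically.
theorem smul_eq_algebraMap_mul (r : ℂ) (a : Osing) : r • a = ι r * a :=
  Algebra.smul_def r a

theorem three_mul_algebraMap_inv : 3 * ι 3⁻¹ = 1 := by
  rw [← map_ofNat ι 3, ← map_mul, mul_inv_cancel₀ three_ne_zero, map_one]

theorem linearCombination_T1basis (m : Fin 7 → ℂ) :
    Fintype.linearCombination ℂ T1basis m = Submodule.Quotient.mk
      (ι (m 0) + ι (m 1) * xb + ι (m 2) * yb + ι (m 3) * zb,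
        ι (m 4) + ι (m 5) * zb + ι (m 6) * zb ^ 2) := by
  simp [Fintype.linearCombination_apply, Fin.sum_univ_seven, T1basis,
    ← Submodule.Quotient.mk_smul, ← Submodule.Quotient.mk_add]
  simp only [smul_eq_algebraMap_mul, mul_one]

theorem xb_smul_linearCombination_T1basis (m : Fin 7 → ℂ) :
    xb • Fintype.linearCombination ℂ T1basis m = Fintype.linearCombination ℂ T1basis (actX m) := by
  rw [linearCombination_T1basis, linearCombination_T1basis, ← Submodule.Quotient.mk_smul]
  apply mk_eq_mk_of _ _ (-3 * ι (m 1) * xb * zb + ι (m 3) * xb + ι (m 6) * xb)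
    (ι (m 4) + ι (m 5) * zb + ι (m 6) * (yb + zb ^ 2)) (ι (m 1) * xb - ι (m 5) * ι 3⁻¹)
  · simp [actX]
    linear_combination (ι (m 2) - ι (m 1)) * xb_mul_yb - ι (m 6) * xb_add_yb_add_zb_sq_mul_zb +
      ι (m 5) * zb ^ 2 * three_mul_algebraMap_inv
  · simp [actX]
    linear_combination (3 * ι (m 1) * zb - ι (m 3) - 2 * ι (m 6)) * xb_mul_yb

theorem yb_smul_linearCombination_T1basis (m : Fin 7 → ℂ) :
    yb • Fintype.linearCombination ℂ T1basis m = Fintype.linearCombination ℂ T1basis (actY m) := by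
  rw [linearCombination_T1basis, linearCombination_T1basis, ← Submodule.Quotient.mk_smul]
  apply mk_eq_mk_of _ _ (ι (m 4) + ι (m 5) * zb + ι (m 6) * (xb + zb ^ 2))
    (-3 * ι (m 2) * yb * zb + ι (m 3) * yb + ι (m 6) * yb) (ι (m 2) * yb - ι (m 5) * ι 3⁻¹)
  · simp [actY]
    linear_combination (ι (m 1) - ι (m 2)) * xb_mul_yb - ι (m 6) * xb_add_yb_add_zb_sq_mul_zb +
      ι (m 5) * zb ^ 2 * three_mul_algebraMap_inv
  · simp [actY]
    linear_combination (3 * ι (m 2) * zb - ι (m 3) - 2 * ι (m 6)) * xb_mul_yb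

theorem zb_smul_linearCombination_T1basis (m : Fin 7 → ℂ) :
    zb • Fintype.linearCombination ℂ T1basis m = Fintype.linearCombination ℂ T1basis (actZ m) := by
  rw [linearCombination_T1basis, linearCombination_T1basis, ← Submodule.Quotient.mk_smul]
  apply mk_eq_mk_of _ _ (ι (m 1) * xb - ι (m 6) * zb) (ι (m 2) * yb - ι (m 6) * zb)
    ((ι (m 3) + 2 * ι (m 6)) * ι 3⁻¹)
  · simp [actZ, map_ofNat]
    linear_combination -(ι (m 3) + 2 * ι (m 6)) * zb ^ 2 * three_mul_algebraMap_inv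
  · simp [actZ]
    linear_combination -(ι (m 1) + ι (m 2)) * xb_mul_yb + ι (m 6) * xb_add_yb_add_zb_sq_mul_zb

def ofCoords : (Fin 7 → ℂ) →ₗ[Osing] T1 where
  toFun := Fintype.linearCombination ℂ T1basis
  map_add' := map_add _
  map_smul' := (Fintype.linearCombination ℂ T1basis).map_smul_of_adjoin_eq_top
    (Ideal.Quotient.adjoin_range_mk_X Ising) <| by
      rintro _ ⟨i, rfl⟩ m
      rw [smul_coords, modelAction_mk_X]
      fin_cases i
      exacts [(xb_smul_linearCombination_T1basis m).symm,
        (yb_smul_linearCombination_T1basis m).symm, (zb_smul_linearCombination_T1basis m).symm]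

theorem ofCoords_single (i : Fin 7) : ofCoords (Pi.single i 1) = T1basis i :=
  (Fintype.linearCombination_apply_single ℂ T1basis i 1).trans (one_smul ℂ _)

theorem toCoords_ofCoords (m : Fin 7 → ℂ) : toCoords (ofCoords m) = m := by
  change toCoords (Fintype.linearCombination ℂ T1basis m) = m
  simpa [Fintype.linearCombination_apply, toCoords.map_smul_of_tower, toCoords_T1basis]
    using (pi_eq_sum_univ' m).symm

theorem ofCoords_toCoords (t : T1) : ofCoords (toCoords t) = t := by
  suffices ofCoords ∘ₗ toCoords = .id from LinearMap.congr_fun this t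
  refine Submodule.linearMap_qext _ (LinearMap.prod_ext (LinearMap.ext_ring ?_)
    (LinearMap.ext_ring ?_))
  · exact (congrArg ofCoords (toCoords_T1basis 0)).trans (ofCoords_single 0)
  · exact (congrArg ofCoords (toCoords_T1basis 4)).trans (ofCoords_single 4)

def coordsEquiv : T1 ≃ₗ[Osing] (Fin 7 → ℂ) :=
  { toCoords with
    invFun := ofCoords
    left_inv := ofCoords_toCoords
    right_inv := toCoords_ofCoords }

def basisT1 : Module.Basis (Fin 7) ℂ T1 :=
  (Pi.basisFun ℂ (Fin 7)).map (coordsEquiv.restrictScalars ℂ).symm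

theorem coe_basisT1 : ⇑basisT1 = T1basis := by
  ext i
  simpa [basisT1, coordsEquiv] using ofCoords_single i

/-- The classes of `f₁*, x f₁*, y f₁*, z f₁*, f₂*, z f₂*, z² f₂*` form a basis of the
versal deformation space `T¹`; in particular `T¹` is a 7-dimensional complex vector
space. -/
theorem stmt6 :
    LinearIndependent ℂ T1basis ∧
    Submodule.span ℂ (Set.range T1basis) = ⊤ ∧
    Module.finrank ℂ T1 = 7 := by
  refine ⟨coe_basisT1 ▸ basisT1.linearIndependent, coe_basisT1 ▸ basisT1.span_eq, ?_⟩
  rw [Module.finrank_eq_card_basis basisT1, Fintype.card_fin]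
end
end
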